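/- Let f ∈ ℂ[x,y,z] be homogeneous of degree d ≥ 1 not divisible by z, and g(x,y) = f(x,y,1). Then the morphism φ : AR(f) → AR(g) defined by φ(a,b,c) = (θ(a) − x·θ(c), θ(b) − y·θ(c), d·θ(c)) is surjective. -/

import Mathlib

/-!
Given a syzygy `(α, β, γ)` of `g`, put `c = γ / d` and homogenize `α + x c`, `β + y c` and `c`
to a common degree `N`. The Euler identity `x f_x + y f_y + z f_z = d f`, read at `z = 1`, shows
that the resulting combination of `f_x, f_y, f_z` dehomogenizes to `α g_x + β g_y + γ g = 0`;
being homogeneous, it is then itself zero, since setting `z = 1` loses no information on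
polynomials of a fixed degree.
-/

open MvPolynomial

noncomputable section

/-- Dehomogenization `θ : ℂ[x,y,z] → ℂ[x,y]`, `u ↦ u(x,y,1)`. -/
def theta (u : MvPolynomial (Fin 3) ℂ) : MvPolynomial (Fin 2) ℂ :=
  aeval ![X 0, X 1, 1] u

lemma Finsupp.comapDomain_castSucc_injOn {n : ℕ} (N : ℕ) :
    Set.InjOn (fun s : Fin (n + 1) →₀ ℕ =>
      s.comapDomain Fin.castSucc (Fin.castSucc_injective n).injOn) {s | s.degree = N} := by
  intro s hs t ht hst
  have hinit (i : Fin n) : s i.castSucc = t i.castSucc := by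
    simpa using DFunLike.congr_fun hst i
  simp only [Set.mem_ofPred_eq, Finsupp.degree_eq_sum, Fin.sum_univ_castSucc, hinit] at hs ht
  ext i
  induction i using Fin.lastCases with
  | last => omega
  | cast i => exact hinit i

namespace MvPolynomial

variable {R : Type*} [CommSemiring R] {n : ℕ}

def dehomogenize : MvPolynomial (Fin (n + 1)) R →ₐ[R] MvPolynomial (Fin n) R :=
  aeval (Fin.lastCases 1 X)

@[simp]
lemma dehomogenize_X_castSucc (i : Fin n) :
    dehomogenize (X i.castSucc : MvPolynomial (Fin (n + 1)) R) = X i := by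
  simp [dehomogenize]

@[simp]
lemma dehomogenize_X_last : dehomogenize (X (Fin.last n) : MvPolynomial (Fin (n + 1)) R) = 1 := by
  simp [dehomogenize]

@[simp]
lemma dehomogenize_rename_castSucc (p : MvPolynomial (Fin n) R) :
    dehomogenize (rename Fin.castSucc p) = p := by
  rw [dehomogenize, aeval_rename]
  simp [Function.comp_def]

lemma dehomogenize_monomial (s : Fin (n + 1) →₀ ℕ) (c : R) :
    dehomogenize (monomial s c) =
      monomial (s.comapDomain Fin.castSucc (Fin.castSucc_injective n).injOn) c := by
  rw [dehomogenize, aeval_monomial, monomial_eq, Finsupp.prod_fintype _ _ (by simp),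
    Finsupp.prod_fintype _ _ (by simp), Fin.prod_univ_castSucc]
  simp [algebraMap_eq]

lemma coeff_dehomogenize_of_isHomogeneous {u : MvPolynomial (Fin (n + 1)) R} {N : ℕ}
    (hu : u.IsHomogeneous N) {s : Fin (n + 1) →₀ ℕ} (hs : s.degree = N) :
    coeff (s.comapDomain Fin.castSucc (Fin.castSucc_injective n).injOn) (dehomogenize u) =
      coeff s u := by
  conv_lhs => rw [u.as_sum]
  rw [map_sum, coeff_sum, Finset.sum_eq_single s]
  · simp [dehomogenize_monomial]
  · intro t ht hts
    rw [dehomogenize_monomial, coeff_monomial, if_neg]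
    exact fun h => hts (Finsupp.comapDomain_castSucc_injOn N
      (hu.degree_eq_sum_deg_support ht).symm hs h)
  · intro hs'
    simp [notMem_support_iff.mp hs']

lemma IsHomogeneous.eq_zero_of_dehomogenize_eq_zero {u : MvPolynomial (Fin (n + 1)) R} {N : ℕ}
    (hu : u.IsHomogeneous N) (h : dehomogenize u = 0) : u = 0 := by
  ext s
  by_cases hs : coeff s u = 0
  · simpa using hs
  · have hdeg := (hu.degree_eq_sum_deg_support (mem_support_iff.mpr hs)).symm
    rw [← coeff_dehomogenize_of_isHomogeneous hu hdeg, h, coeff_zero, coeff_zero]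

def homogenize (N : ℕ) (p : MvPolynomial (Fin n) R) : MvPolynomial (Fin (n + 1)) R :=
  ∑ k ∈ Finset.range (N + 1),
    rename Fin.castSucc (homogeneousComponent k p) * X (Fin.last n) ^ (N - k)

lemma isHomogeneous_homogenize (N : ℕ) (p : MvPolynomial (Fin n) R) :
    (homogenize N p).IsHomogeneous N := by
  refine IsHomogeneous.sum _ _ _ fun k hk => ?_
  have hkN : k + (N - k) = N := by rw [Finset.mem_range] at hk; omega
  simpa only [hkN] using (homogeneousComponent_isHomogeneous k p).rename_isHomogeneous.mul
    (isHomogeneous_X_pow (Fin.last n) (N - k))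

lemma dehomogenize_homogenize {N : ℕ} {p : MvPolynomial (Fin n) R} (h : p.totalDegree ≤ N) :
    dehomogenize (homogenize N p) = p := by
  simp only [homogenize, map_sum, map_mul, map_pow, dehomogenize_rename_castSucc,
    dehomogenize_X_last, one_pow, mul_one]
  conv_rhs => rw [← sum_homogeneousComponent p]
  refine (Finset.sum_subset (Finset.range_subset_range.mpr (by omega)) fun k _ hk => ?_).symm
  exact homogeneousComponent_eq_zero k p (by simpa using hk)

lemma pderiv_dehomogenize_X (i : Fin n) (j : Fin (n + 1)) :
    pderiv i (dehomogenize (X j : MvPolynomial (Fin (n + 1)) R)) =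
      dehomogenize (pderiv i.castSucc (X j)) := by
  induction j using Fin.lastCases with
  | last => simp [pderiv_X]
  | cast j => simp [pderiv_X, Pi.single_apply, apply_ite dehomogenize]

lemma pderiv_dehomogenize (i : Fin n) (u : MvPolynomial (Fin (n + 1)) R) :
    pderiv i (dehomogenize u) = dehomogenize (pderiv i.castSucc u) := by
  induction u using MvPolynomial.induction_on with
  | C a => simp [dehomogenize]
  | add p q hp hq => simp only [map_add, hp, hq]
  | mul_X p j hp =>
    simp only [map_mul, Derivation.leibniz, smul_eq_mul, map_add, hp, pderiv_dehomogenize_X]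

lemma IsHomogeneous.sum_X_mul_pderiv_dehomogenize_add {f : MvPolynomial (Fin (n + 1)) R} {d : ℕ}
    (hf : f.IsHomogeneous d) :
    ∑ i, X i * pderiv i (dehomogenize f) + dehomogenize (pderiv (Fin.last n) f) =
      d • dehomogenize f := by
  have euler := congrArg dehomogenize hf.sum_X_mul_pderiv
  rw [Fin.sum_univ_castSucc, map_add, map_sum, map_nsmul] at euler
  simpa [pderiv_dehomogenize] using euler

theorem IsHomogeneous.exists_syzygy_dehomogenize_eq {R : Type*} [CommRing R]
    {f : MvPolynomial (Fin (n + 1)) R} {d : ℕ} (hf : f.IsHomogeneous d) (hd : IsUnit (d : R))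
    (α : Fin n → MvPolynomial (Fin n) R) (γ : MvPolynomial (Fin n) R)
    (hsyz : ∑ i, α i * pderiv i (dehomogenize f) + γ * dehomogenize f = 0) :
    ∃ a : Fin (n + 1) → MvPolynomial (Fin (n + 1)) R,
      ∑ i, a i * pderiv i f = 0 ∧
      (∀ i, dehomogenize (a i.castSucc) - X i * dehomogenize (a (Fin.last n)) = α i) ∧
      (d : MvPolynomial (Fin n) R) * dehomogenize (a (Fin.last n)) = γ := by
  set c := C (↑hd.unit⁻¹ : R) * γ
  have hdc : (d : MvPolynomial (Fin n) R) * c = γ := by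
    rw [← mul_assoc, ← map_natCast C, ← map_mul, IsUnit.mul_val_inv, map_one, one_mul]
  set N := c.totalDegree ⊔ Finset.univ.sup fun i => (α i + X i * c).totalDegree
  set a : Fin (n + 1) → MvPolynomial (Fin (n + 1)) R :=
    Fin.lastCases (homogenize N c) fun i => homogenize N (α i + X i * c)
  have ha_last : dehomogenize (a (Fin.last n)) = c := by
    simpa [a] using dehomogenize_homogenize (le_sup_left : c.totalDegree ≤ N)
  have ha_castSucc (i : Fin n) : dehomogenize (a i.castSucc) = α i + X i * c := by
    simpa [a] using dehomogenize_homogenize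
      (le_sup_of_le_right (Finset.le_sup (Finset.mem_univ i)) : _ ≤ N)
  have ha_hom (i : Fin (n + 1)) : (a i).IsHomogeneous N := by
    induction i using Fin.lastCases <;> simp [a, isHomogeneous_homogenize]
  refine ⟨a, ?_, fun i => by rw [ha_castSucc, ha_last, add_sub_cancel_right],
    by rw [ha_last, hdc]⟩
  refine (IsHomogeneous.sum _ _ (N + (d - 1)) fun i _ => (ha_hom i).mul
    hf.pderiv).eq_zero_of_dehomogenize_eq_zero ?_
  have euler := hf.sum_X_mul_pderiv_dehomogenize_add
  have hXc : ∑ i, X i * c * pderiv i (dehomogenize f) =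
      c * ∑ i, X i * pderiv i (dehomogenize f) := by
    rw [Finset.mul_sum]; exact Finset.sum_congr rfl fun i _ => by ring
  rw [map_sum, Fin.sum_univ_castSucc]
  simp only [map_mul, ha_castSucc, ha_last, ← pderiv_dehomogenize, add_mul,
    Finset.sum_add_distrib, nsmul_eq_mul] at euler ⊢
  linear_combination hsyz + c * euler + hXc + dehomogenize f * hdc

end MvPolynomial

lemma theta_eq_dehomogenize (u : MvPolynomial (Fin 3) ℂ) : theta u = dehomogenize u := by
  rw [theta, dehomogenize]
  congr
  funext i
  fin_cases i <;> rfl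

theorem phi_surjective (f : MvPolynomial (Fin 3) ℂ) (d : ℕ) (hd : 1 ≤ d)
    (hf : f.IsHomogeneous d) :
    ∀ α β γ : MvPolynomial (Fin 2) ℂ,
      α * pderiv (0 : Fin 2) (theta f) + β * pderiv (1 : Fin 2) (theta f) + γ * theta f = 0 →
      ∃ a b c : MvPolynomial (Fin 3) ℂ,
        a * pderiv (0 : Fin 3) f + b * pderiv (1 : Fin 3) f + c * pderiv (2 : Fin 3) f = 0 ∧
        theta a - X 0 * theta c = α ∧
        theta b - X 1 * theta c = β ∧
        (d : MvPolynomial (Fin 2) ℂ) * theta c = γ := by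
  intro α β γ hsyz
  simp only [theta_eq_dehomogenize] at hsyz ⊢
  have hd_unit : IsUnit (d : ℂ) := (Nat.cast_ne_zero.mpr (by omega)).isUnit
  obtain ⟨a, ha, hinit, hlast⟩ := hf.exists_syzygy_dehomogenize_eq hd_unit ![α, β] γ
    (by simpa [Fin.sum_univ_two] using hsyz)
  exact ⟨a 0, a 1, a 2, by simpa [Fin.sum_univ_three] using ha, hinit 0, hinit 1, hlast⟩
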